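/- arXiv:2405.09677 — 2 statements merged into one kernel-verified Lean document; each statement's English description precedes it below -/
import Mathlib

section
/- Assume in addition that φ(ξ) = 0 whenever |ξ| > 1. Set D₀ = inf{dist(K, k+K) : k ∈ ℤ^d, k ≠ 0} > 0, and suppose δ : (0,∞) → (0,∞) satisfies δ(ε) → 0 as ε → 0⁺ and ε < D₀ δ(ε) for every ε. Then for every u ∈ L²(Ω) there exists a family (u_ε) ⊂ L²(Ω) such that F^φ_{δ(ε),ε}(u_ε) = 0 for every ε and u_ε → u strongly in L²(Ω) as ε → 0⁺. -/
open MeasureTheory Filter Metric Set Pointwise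
open scoped Topology ENNReal NNReal

noncomputable section

/-- The lattice point of `ℤ^d` inside `ℝ^d`. -/
def lat (d : ℕ) (k : Fin d → ℤ) : EuclideanSpace ℝ (Fin d) := WithLp.toLp 2 (fun i => (k i : ℝ))

/-- The periodic set `E = ⋃_{k ∈ ℤ^d} (k + K)`. -/
def latSet (d : ℕ) (K : Set (EuclideanSpace ℝ (Fin d))) : Set (EuclideanSpace ℝ (Fin d)) :=
  ⋃ k : Fin d → ℤ, (lat d k +ᵥ K)

/-- `K` is compact, the closure of a bounded connected open set, with negligible boundary,
whose integer translates are pairwise disjoint. -/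
def IsAdmissibleK (d : ℕ) (K : Set (EuclideanSpace ℝ (Fin d))) : Prop :=
  (∃ U : Set (EuclideanSpace ℝ (Fin d)),
      IsOpen U ∧ IsConnected U ∧ Bornology.IsBounded U ∧ K = closure U) ∧
  MeasureTheory.volume (frontier K) = 0 ∧
  ∀ k : Fin d → ℤ, k ≠ 0 → Disjoint (lat d k +ᵥ K) K

/-- `φ` is a radial kernel with nonincreasing nonnegative profile `φ₀` and finite
second moment. -/
def IsKernel (d : ℕ) (φ : EuclideanSpace ℝ (Fin d) → ℝ) (φ₀ : ℝ → ℝ) : Prop :=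
  (∀ t, 0 ≤ φ₀ t) ∧ AntitoneOn φ₀ (Set.Ici 0) ∧ (∀ ξ, φ ξ = φ₀ ‖ξ‖) ∧
  MeasureTheory.Integrable (fun ξ : EuclideanSpace ℝ (Fin d) => φ ξ * (1 + ‖ξ‖ ^ 2))

/-- The nonlocal functional `F^φ_{δ,ε}`. -/
def Fphi (d : ℕ) (φ : EuclideanSpace ℝ (Fin d) → ℝ) (Ω K : Set (EuclideanSpace ℝ (Fin d)))
    (δ ε : ℝ) (u : EuclideanSpace ℝ (Fin d) → ℝ) : ℝ :=
  (ε ^ (d + 2))⁻¹ * ∫ x in Ω ∩ δ • latSet d K, ∫ y in Ω ∩ δ • latSet d K,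
    φ (ε⁻¹ • (x - y)) * (u x - u y) ^ 2

/-- The nonlocal functional `F_{δ,ε}` with the truncation kernel `χ_{B₁}`. -/
def Fball (d : ℕ) (Ω K : Set (EuclideanSpace ℝ (Fin d))) (δ ε : ℝ)
    (u : EuclideanSpace ℝ (Fin d) → ℝ) : ℝ :=
  (ε ^ (d + 2))⁻¹ *
    ∫ p in ((Ω ∩ δ • latSet d K) ×ˢ (Ω ∩ δ • latSet d K)) ∩
      {p : EuclideanSpace ℝ (Fin d) × EuclideanSpace ℝ (Fin d) | dist p.1 p.2 < ε},
      (u p.1 - u p.2) ^ 2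

/-- Distance between two sets. -/
def setDist {α : Type*} [PseudoMetricSpace α] (A B : Set α) : ℝ :=
  sInf {r : ℝ | ∃ x ∈ A, ∃ y ∈ B, r = dist x y}

/-- `D₀ = inf {dist(K, k+K) : k ∈ ℤ^d, k ≠ 0}`. -/
def D0 (d : ℕ) (K : Set (EuclideanSpace ℝ (Fin d))) : ℝ :=
  sInf {r : ℝ | ∃ k : Fin d → ℤ, k ≠ 0 ∧ r = setDist K (lat d k +ᵥ K)}

/-!
Distinct cells of `δE` are more than `D₀ δ > ε` apart, so a kernel supported in the unit ball
never couples two different cells: any function constant on each cell of `δE` has zero energy,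
whatever it does off `δE`. Such functions approximate `u`: take a compactly supported continuous
`g` close to `u` in `L²(Ω)`, replace it on each cell `δ(k + K)` by its value at `δ(k + x₀)` (an
error controlled by the modulus of continuity of `g` at scale `δ · diam K → 0`), and keep `u`
off `δE`. A diagonal choice over the tolerance then gives the family `u_ε`.
-/

section Lattice

variable {d : ℕ} {K : Set (EuclideanSpace ℝ (Fin d))}

lemma lat_sub (k l : Fin d → ℤ) : lat d (k - l) = lat d k - lat d l := by
  ext i
  simp [lat]

lemma eq_of_mem_lat_vadd (hdisj : ∀ k : Fin d → ℤ, k ≠ 0 → Disjoint (lat d k +ᵥ K) K)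
    {z : EuclideanSpace ℝ (Fin d)} {k l : Fin d → ℤ}
    (hk : z ∈ lat d k +ᵥ K) (hl : z ∈ lat d l +ᵥ K) : k = l := by
  by_contra hne
  obtain ⟨a, ha, rfl⟩ := hk
  obtain ⟨b, hb, hab⟩ := hl
  refine Set.disjoint_left.mp (hdisj (k - l) (sub_ne_zero.2 hne)) ⟨a, ha, ?_⟩ hb
  simp only [vadd_eq_add] at hab ⊢
  rw [lat_sub, eq_sub_of_add_eq' hab]
  abel

lemma setDist_nonneg {α : Type*} [PseudoMetricSpace α] (A B : Set α) : 0 ≤ setDist A B :=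
  Real.sInf_nonneg (by rintro _ ⟨x, -, y, -, rfl⟩; exact dist_nonneg)

lemma setDist_le_dist {α : Type*} [PseudoMetricSpace α] {A B : Set α} {x y : α}
    (hx : x ∈ A) (hy : y ∈ B) : setDist A B ≤ dist x y :=
  csInf_le ⟨0, by rintro _ ⟨x, -, y, -, rfl⟩; exact dist_nonneg⟩ ⟨x, hx, y, hy, rfl⟩

lemma D0_le_setDist {k : Fin d → ℤ} (hk : k ≠ 0) : D0 d K ≤ setDist K (lat d k +ᵥ K) :=
  csInf_le ⟨0, by rintro _ ⟨l, -, rfl⟩; exact setDist_nonneg _ _⟩ ⟨k, hk, rfl⟩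

lemma D0_le_dist {x y : EuclideanSpace ℝ (Fin d)} {k l : Fin d → ℤ}
    (hk : x ∈ lat d k +ᵥ K) (hl : y ∈ lat d l +ᵥ K) (hne : k ≠ l) : D0 d K ≤ dist x y := by
  obtain ⟨a, ha, rfl⟩ := hk
  obtain ⟨b, hb, rfl⟩ := hl
  calc D0 d K ≤ setDist K (lat d (l - k) +ᵥ K) := D0_le_setDist (sub_ne_zero.2 hne.symm)
    _ ≤ dist a (lat d (l - k) +ᵥ b) := setDist_le_dist ha (vadd_mem_vadd_set hb)
    _ = dist (lat d k +ᵥ a) (lat d l +ᵥ b) := by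
      simp only [lat_sub, vadd_eq_add, dist_eq_norm]
      congr 1
      abel

lemma measurableSet_latSet (hK : MeasurableSet K) : MeasurableSet (latSet d K) :=
  MeasurableSet.iUnion fun k => hK.const_vadd (lat d k)

end Lattice

section CellIndex

variable {d : ℕ} {K : Set (EuclideanSpace ℝ (Fin d))}

open Classical in
def cellIdx (d : ℕ) (K : Set (EuclideanSpace ℝ (Fin d))) (z : EuclideanSpace ℝ (Fin d)) :
    Fin d → ℤ :=
  if h : z ∈ latSet d K then (mem_iUnion.1 h).choose else 0

lemma cellIdx_mem {z : EuclideanSpace ℝ (Fin d)} (h : z ∈ latSet d K) :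
    z ∈ lat d (cellIdx d K z) +ᵥ K := by
  rw [cellIdx, dif_pos h]
  exact (mem_iUnion.1 h).choose_spec

lemma cellIdx_eq (hdisj : ∀ k : Fin d → ℤ, k ≠ 0 → Disjoint (lat d k +ᵥ K) K)
    {z : EuclideanSpace ℝ (Fin d)} {k : Fin d → ℤ} (h : z ∈ lat d k +ᵥ K) : cellIdx d K z = k :=
  eq_of_mem_lat_vadd hdisj (cellIdx_mem (mem_iUnion.2 ⟨k, h⟩)) h

lemma cellIdx_eq_of_dist_lt {x y : EuclideanSpace ℝ (Fin d)}
    (hx : x ∈ latSet d K) (hy : y ∈ latSet d K) (hxy : dist x y < D0 d K) :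
    cellIdx d K x = cellIdx d K y := by
  by_contra hne
  exact hxy.not_ge (D0_le_dist (cellIdx_mem hx) (cellIdx_mem hy) hne)

lemma cellIdx_preimage_singleton (hdisj : ∀ k : Fin d → ℤ, k ≠ 0 → Disjoint (lat d k +ᵥ K) K)
    (k : Fin d → ℤ) :
    cellIdx d K ⁻¹' {k} = (lat d k +ᵥ K) ∪ (latSet d K)ᶜ ∩ {_z | k = 0} := by
  ext z
  by_cases hz : z ∈ latSet d K
  · obtain ⟨l, hl⟩ := mem_iUnion.1 hz
    simp only [mem_preimage, mem_singleton_iff, cellIdx_eq hdisj hl, mem_union, mem_inter_iff,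
      mem_compl_iff, hz, not_true_eq_false, false_and, or_false]
    exact ⟨by rintro rfl; exact hl, eq_of_mem_lat_vadd hdisj hl⟩
  · have hk : z ∉ lat d k +ᵥ K := fun h => hz (mem_iUnion.2 ⟨k, h⟩)
    simp [cellIdx, hz, hk, eq_comm]

lemma measurable_cellIdx (hdisj : ∀ k : Fin d → ℤ, k ≠ 0 → Disjoint (lat d k +ᵥ K) K)
    (hK : MeasurableSet K) : Measurable (cellIdx d K) :=
  measurable_to_countable' fun k => by
    rw [cellIdx_preimage_singleton hdisj]
    exact (hK.const_vadd _).union ((measurableSet_latSet hK).compl.inter (MeasurableSet.const _))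

end CellIndex

section CellProjection

variable {d : ℕ} {K : Set (EuclideanSpace ℝ (Fin d))} {x₀ : EuclideanSpace ℝ (Fin d)} {δ : ℝ}

def cellProj (d : ℕ) (K : Set (EuclideanSpace ℝ (Fin d))) (x₀ : EuclideanSpace ℝ (Fin d))
    (δ : ℝ) (x : EuclideanSpace ℝ (Fin d)) : EuclideanSpace ℝ (Fin d) :=
  δ • (lat d (cellIdx d K (δ⁻¹ • x)) + x₀)

lemma cellProj_eq_of_dist_lt (hδ : 0 < δ) {x y : EuclideanSpace ℝ (Fin d)}
    (hx : x ∈ δ • latSet d K) (hy : y ∈ δ • latSet d K) (hxy : dist x y < D0 d K * δ) :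
    cellProj d K x₀ δ x = cellProj d K x₀ δ y := by
  rw [mem_smul_set_iff_inv_smul_mem₀ hδ.ne'] at hx hy
  have hscaled : dist (δ⁻¹ • x) (δ⁻¹ • y) < D0 d K := by
    rwa [dist_smul₀, norm_inv, Real.norm_of_nonneg hδ.le, inv_mul_lt_iff₀ hδ, mul_comm]
  rw [cellProj, cellProj, cellIdx_eq_of_dist_lt hx hy hscaled]

lemma dist_cellProj_le (hδ : 0 < δ) (hKb : Bornology.IsBounded K) (hx₀ : x₀ ∈ K)
    {x : EuclideanSpace ℝ (Fin d)} (hx : x ∈ δ • latSet d K) :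
    dist (cellProj d K x₀ δ x) x ≤ δ * diam K := by
  rw [mem_smul_set_iff_inv_smul_mem₀ hδ.ne'] at hx
  set k := cellIdx d K (δ⁻¹ • x)
  obtain ⟨z, hz, hzx⟩ : δ⁻¹ • x ∈ lat d k +ᵥ K := cellIdx_mem hx
  simp only [vadd_eq_add] at hzx
  calc dist (cellProj d K x₀ δ x) x = dist (δ • (lat d k + x₀)) (δ • (δ⁻¹ • x)) := by
        rw [smul_inv_smul₀ hδ.ne', cellProj]
    _ = δ * dist x₀ z := by
        rw [dist_smul₀, Real.norm_of_nonneg hδ.le, ← hzx, dist_add_left]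
    _ ≤ δ * diam K := by gcongr; exact dist_le_diam_of_mem hKb hx₀ hz

lemma measurable_cellProj (hdisj : ∀ k : Fin d → ℤ, k ≠ 0 → Disjoint (lat d k +ᵥ K) K)
    (hK : MeasurableSet K) : Measurable (cellProj d K x₀ δ) :=
  (measurable_of_countable fun k => δ • (lat d k + x₀)).comp
    ((measurable_cellIdx hdisj hK).comp (measurable_const_smul δ⁻¹))

end CellProjection

lemma Fphi_eq_zero_of_forall_dist_le {d : ℕ} {φ : EuclideanSpace ℝ (Fin d) → ℝ}
    (hsupp : ∀ ξ : EuclideanSpace ℝ (Fin d), 1 < ‖ξ‖ → φ ξ = 0)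
    {Ω K : Set (EuclideanSpace ℝ (Fin d))} {δ ε : ℝ} (hε : 0 < ε)
    {v : EuclideanSpace ℝ (Fin d) → ℝ}
    (hv : ∀ x ∈ δ • latSet d K, ∀ y ∈ δ • latSet d K, dist x y ≤ ε → v x = v y) :
    Fphi d φ Ω K δ ε v = 0 := by
  suffices h : ∀ x ∈ δ • latSet d K, ∀ y ∈ δ • latSet d K,
      φ (ε⁻¹ • (x - y)) * (v x - v y) ^ 2 = 0 by
    rw [Fphi, setIntegral_eq_zero_of_forall_eq_zero fun x hx =>
      setIntegral_eq_zero_of_forall_eq_zero fun y hy => h x hx.2 y hy.2, mul_zero]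
  intro x hx y hy
  rcases le_or_gt (dist x y) ε with hxy | hxy
  · rw [hv x hx y hy hxy, sub_self, zero_pow two_ne_zero, mul_zero]
  · rw [hsupp, zero_mul]
    rwa [norm_smul, norm_inv, Real.norm_of_nonneg hε.le, ← dist_eq_norm, one_lt_inv_mul₀ hε]

lemma integral_sq_piecewise_sub_le {α : Type*} [MeasurableSpace α] {μ : Measure α}
    [IsFiniteMeasure μ] {s : Set α} [DecidablePred (· ∈ s)] (hs : MeasurableSet s)
    {f g u : α → ℝ} (hf : MemLp f 2 (μ.restrict s)) (hg : MemLp g 2 μ) (hu : MemLp u 2 μ)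
    {r : ℝ} (hr : 0 ≤ r) (hfg : ∀ x ∈ s, (f x - g x) ^ 2 ≤ r) :
    ∫ x, (s.piecewise f u x - u x) ^ 2 ∂μ ≤ 2 * r * μ.real univ + 2 * ∫ x, (g x - u x) ^ 2 ∂μ := by
  have hgu : Integrable (fun x => (g x - u x) ^ 2) μ := (hg.sub hu).integrable_sq
  calc ∫ x, (s.piecewise f u x - u x) ^ 2 ∂μ ≤ ∫ x, (2 * r + 2 * (g x - u x) ^ 2) ∂μ := by
        refine integral_mono ((hf.piecewise hs (hu.restrict sᶜ)).sub hu).integrable_sq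
          ((integrable_const _).add (hgu.const_mul 2)) fun x => ?_
        by_cases hx : x ∈ s
        · rw [piecewise_eq_of_mem _ _ _ hx]
          nlinarith [hfg x hx, sq_nonneg (f x - 2 * g x + u x)]
        · rw [piecewise_eq_of_notMem _ _ _ hx, sub_self, zero_pow two_ne_zero]
          positivity
    _ = 2 * r * μ.real univ + 2 * ∫ x, (g x - u x) ^ 2 ∂μ := by
        rw [integral_add (integrable_const _) (hgu.const_mul 2), integral_const, integral_const_mul,
          smul_eq_mul]
        ring

lemma IsAdmissibleK.isCompact {d : ℕ} {K : Set (EuclideanSpace ℝ (Fin d))}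
    (hK : IsAdmissibleK d K) : IsCompact K := by
  obtain ⟨⟨U, -, -, hUb, rfl⟩, -⟩ := hK
  exact hUb.isCompact_closure

lemma IsAdmissibleK.nonempty {d : ℕ} {K : Set (EuclideanSpace ℝ (Fin d))}
    (hK : IsAdmissibleK d K) : K.Nonempty := by
  obtain ⟨⟨U, -, hUc, -, rfl⟩, -⟩ := hK
  exact hUc.nonempty.closure

lemma exists_Fphi_eq_zero_integral_sq_sub_le {d : ℕ}
    {K : Set (EuclideanSpace ℝ (Fin d))} (hK : IsAdmissibleK d K)
    {Ω : Set (EuclideanSpace ℝ (Fin d))} (hΩb : Bornology.IsBounded Ω)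
    {φ : EuclideanSpace ℝ (Fin d) → ℝ} (hsupp : ∀ ξ : EuclideanSpace ℝ (Fin d), 1 < ‖ξ‖ → φ ξ = 0)
    {δ ε : ℝ} (hε : 0 < ε) (hδ : 0 < δ) (hεδ : ε < D0 d K * δ)
    {u : EuclideanSpace ℝ (Fin d) → ℝ} (hu : MemLp u 2 (volume.restrict Ω))
    {g : EuclideanSpace ℝ (Fin d) → ℝ} (hg_cont : Continuous g) (hg_supp : HasCompactSupport g)
    {r : ℝ} (hr : 0 ≤ r) (hgr : ∀ x y, dist x y ≤ δ * diam K → (g x - g y) ^ 2 ≤ r) :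
    ∃ v : EuclideanSpace ℝ (Fin d) → ℝ, MemLp v 2 (volume.restrict Ω) ∧
      Fphi d φ Ω K δ ε v = 0 ∧
      ∫ x in Ω, (v x - u x) ^ 2
        ≤ 2 * r * (volume.restrict Ω).real univ + 2 * ∫ x in Ω, (g x - u x) ^ 2 := by
  classical
  have hdisj := hK.2.2
  have hKm : MeasurableSet K := hK.isCompact.isClosed.measurableSet
  obtain ⟨x₀, hx₀⟩ := hK.nonempty
  have : IsFiniteMeasure (volume.restrict Ω) := isFiniteMeasure_restrict.2 hΩb.measure_lt_top.ne
  set s := δ • latSet d K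
  have hs : MeasurableSet s := (measurableSet_latSet hKm).const_smul_of_ne_zero hδ.ne'
  obtain ⟨C, hC⟩ := hg_cont.bounded_above_of_compact_support hg_supp
  have hsample : MemLp (g ∘ cellProj d K x₀ δ) 2 ((volume.restrict Ω).restrict s) :=
    .of_bound (hg_cont.measurable.comp (measurable_cellProj hdisj hKm)).aestronglyMeasurable C
      (ae_of_all _ fun x => hC _)
  refine ⟨s.piecewise (g ∘ cellProj d K x₀ δ) u, hsample.piecewise hs (hu.restrict sᶜ),
    Fphi_eq_zero_of_forall_dist_le hsupp hε fun x hx y hy hxy => ?_,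
    integral_sq_piecewise_sub_le hs hsample
      (.of_bound hg_cont.aestronglyMeasurable C (ae_of_all _ hC)) hu hr fun x hx => ?_⟩
  · rw [piecewise_eq_of_mem s _ _ hx, piecewise_eq_of_mem s _ _ hy, Function.comp_apply,
      Function.comp_apply, cellProj_eq_of_dist_lt hδ hx hy (hxy.trans_lt hεδ)]
  · exact hgr _ _ (dist_cellProj_le hδ hK.isCompact.isBounded hx₀ hx)

lemma eventually_exists_Fphi_eq_zero_integral_sq_sub_lt {d : ℕ}
    {K : Set (EuclideanSpace ℝ (Fin d))} (hK : IsAdmissibleK d K)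
    {Ω : Set (EuclideanSpace ℝ (Fin d))} (hΩb : Bornology.IsBounded Ω)
    {φ : EuclideanSpace ℝ (Fin d) → ℝ} (hsupp : ∀ ξ : EuclideanSpace ℝ (Fin d), 1 < ‖ξ‖ → φ ξ = 0)
    {δ : ℝ → ℝ} (hδpos : ∀ ε > (0:ℝ), 0 < δ ε) (hδ0 : Tendsto δ (𝓝[>] (0:ℝ)) (𝓝 0))
    (hδlt : ∀ ε > (0:ℝ), ε < D0 d K * δ ε)
    {u : EuclideanSpace ℝ (Fin d) → ℝ} (hu : MemLp u 2 (volume.restrict Ω)) {η : ℝ} (hη : 0 < η) :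
    ∀ᶠ ε in 𝓝[>] (0:ℝ), ∃ v : EuclideanSpace ℝ (Fin d) → ℝ,
      MemLp v 2 (volume.restrict Ω) ∧ Fphi d φ Ω K (δ ε) ε v = 0 ∧
      ∫ x in Ω, (v x - u x) ^ 2 < η := by
  set A := (volume.restrict Ω).real univ
  set r := η / (4 * (A + 1))
  have hr : 0 < r := by positivity
  have hrA : 2 * r * A < η / 2 := by
    have hrη : r * (4 * (A + 1)) = η := div_mul_cancel₀ _ (by positivity)
    nlinarith
  have hu' : MemLp u (ENNReal.ofReal 2) (volume.restrict Ω) := by rwa [ENNReal.ofReal_ofNat]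
  obtain ⟨g, hg_supp, hgu, hg_cont, -⟩ :=
    hu'.exists_hasCompactSupport_integral_rpow_sub_le two_pos (show 0 < η / 4 by positivity)
  have hgu' : ∫ x in Ω, (g x - u x) ^ 2 ≤ η / 4 := by
    refine (le_of_eq (integral_congr_ae (ae_of_all _ fun x => ?_))).trans hgu
    simp only [Real.rpow_two, Real.norm_eq_abs, sq_abs]
    ring
  obtain ⟨ζ, hζ, hgζ⟩ := Metric.uniformContinuous_iff.1
    (hg_supp.uniformContinuous_of_continuous hg_cont) (√r) (Real.sqrt_pos.2 hr)
  have hsmall : ∀ᶠ ε in 𝓝[>] (0:ℝ), δ ε * diam K < ζ :=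
    (hδ0.mul_const (diam K)).eventually (gt_mem_nhds (by simpa using hζ))
  filter_upwards [self_mem_nhdsWithin, hsmall] with ε (hε : 0 < ε) hεζ
  have hgr : ∀ x y, dist x y ≤ δ ε * diam K → (g x - g y) ^ 2 ≤ r := fun x y hxy => by
    rw [← sq_abs, ← Real.dist_eq]
    exact ((Real.lt_sqrt dist_nonneg).1 (hgζ (hxy.trans_lt hεζ))).le
  obtain ⟨v, hv, hFv, hvu⟩ := exists_Fphi_eq_zero_integral_sq_sub_le hK hΩb hsupp hε
    (hδpos ε hε) (hδlt ε hε) hu hg_cont hg_supp hr.le hgr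
  exact ⟨v, hv, hFv, by linarith⟩

lemma exists_tendsto_zero_of_eventually_exists_lt {α : Type*} {P : ℝ → α → Prop} {e : α → ℝ}
    (he : ∀ a, 0 ≤ e a) (hP : ∀ ε > (0:ℝ), ∃ a, P ε a)
    (h : ∀ η > (0:ℝ), ∀ᶠ ε in 𝓝[>] (0:ℝ), ∃ a, P ε a ∧ e a < η) :
    ∃ f : ℝ → α, (∀ ε > (0:ℝ), P ε (f ε)) ∧ Tendsto (fun ε => e (f ε)) (𝓝[>] (0:ℝ)) (𝓝 0) := by
  have hchoice : ∀ ε : ℝ, ∃ a, 0 < ε → P ε a ∧ e a < sInf (e '' {a | P ε a}) + ε := fun ε => by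
    by_cases hε : 0 < ε
    · obtain ⟨a₀, ha₀⟩ := hP ε hε
      obtain ⟨_, ⟨a, ha, rfl⟩, hlt⟩ := exists_lt_of_csInf_lt (s := e '' {a | P ε a})
        ⟨e a₀, mem_image_of_mem e ha₀⟩ (lt_add_of_pos_right _ hε)
      exact ⟨a, fun _ => ⟨ha, hlt⟩⟩
    · exact ⟨(hP 1 one_pos).choose, fun h => absurd h hε⟩
  choose f hf using hchoice
  refine ⟨f, fun ε hε => (hf ε hε).1, tendsto_order.2 ⟨fun η hη => ?_, fun η hη => ?_⟩⟩
  · exact Eventually.of_forall fun ε => hη.trans_le (he _)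
  · filter_upwards [self_mem_nhdsWithin, h (η / 2) (half_pos hη),
      nhdsWithin_le_nhds (gt_mem_nhds (half_pos hη))] with ε (hε : 0 < ε) ⟨a, ha, hea⟩ hεη
    have hinf : sInf (e '' {a | P ε a}) ≤ e a :=
      csInf_le ⟨0, by rintro _ ⟨b, -, rfl⟩; exact he b⟩ (mem_image_of_mem e ha)
    linarith [(hf ε hε).2]

theorem stmt_2_general (d : ℕ)
    (K : Set (EuclideanSpace ℝ (Fin d))) (hK : IsAdmissibleK d K)
    (Ω : Set (EuclideanSpace ℝ (Fin d))) (hΩb : Bornology.IsBounded Ω)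
    (φ : EuclideanSpace ℝ (Fin d) → ℝ)
    (hsupp : ∀ ξ : EuclideanSpace ℝ (Fin d), 1 < ‖ξ‖ → φ ξ = 0)
    (δ : ℝ → ℝ) (hδpos : ∀ ε > (0:ℝ), 0 < δ ε)
    (hδ0 : Tendsto δ (𝓝[>] (0:ℝ)) (𝓝 0))
    (hδlt : ∀ ε > (0:ℝ), ε < D0 d K * δ ε) :
    ∀ u : EuclideanSpace ℝ (Fin d) → ℝ, MemLp u 2 (volume.restrict Ω) →
      ∃ uε : ℝ → EuclideanSpace ℝ (Fin d) → ℝ,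
        (∀ ε > (0:ℝ), MemLp (uε ε) 2 (volume.restrict Ω)) ∧
        (∀ ε > (0:ℝ), Fphi d φ Ω K (δ ε) ε (uε ε) = 0) ∧
        Tendsto (fun ε => ∫ x in Ω, (uε ε x - u x) ^ 2) (𝓝[>] (0:ℝ)) (𝓝 0) := by
  intro u hu
  have hzero : ∀ ε > (0:ℝ), Fphi d φ Ω K (δ ε) ε 0 = 0 := fun ε hε =>
    Fphi_eq_zero_of_forall_dist_le hsupp hε fun _ _ _ _ _ => rfl
  obtain ⟨uε, huε, hlim⟩ := exists_tendsto_zero_of_eventually_exists_lt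
    (P := fun ε v => MemLp v 2 (volume.restrict Ω) ∧ Fphi d φ Ω K (δ ε) ε v = 0)
    (e := fun v => ∫ x in Ω, (v x - u x) ^ 2) (fun v => integral_nonneg fun x => sq_nonneg _)
    (fun ε hε => ⟨0, MemLp.zero, hzero ε hε⟩)
    (fun η hη => (eventually_exists_Fphi_eq_zero_integral_sq_sub_lt hK hΩb hsupp hδpos hδ0 hδlt
      hu hη).mono fun ε ⟨v, hv, hFv, hvu⟩ => ⟨v, ⟨hv, hFv⟩, hvu⟩)
  exact ⟨uε, fun ε hε => (huε ε hε).1, fun ε hε => (huε ε hε).2, hlim⟩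

/-- for compactly supported kernels, if `ε < D₀ δ(ε)`, every `u ∈ L²(Ω)`
is approximated in `L²(Ω)` by functions of zero energy. -/
theorem stmt_2 (d : ℕ) (hd : 1 ≤ d)
    (K : Set (EuclideanSpace ℝ (Fin d))) (hK : IsAdmissibleK d K)
    (Ω : Set (EuclideanSpace ℝ (Fin d))) (hΩo : IsOpen Ω) (hΩb : Bornology.IsBounded Ω)
    (φ : EuclideanSpace ℝ (Fin d) → ℝ) (φ₀ : ℝ → ℝ) (hφ : IsKernel d φ φ₀)
    (hsupp : ∀ ξ : EuclideanSpace ℝ (Fin d), 1 < ‖ξ‖ → φ ξ = 0)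
    (δ : ℝ → ℝ) (hδpos : ∀ ε > (0:ℝ), 0 < δ ε)
    (hδ0 : Tendsto δ (𝓝[>] (0:ℝ)) (𝓝 0))
    (hδlt : ∀ ε > (0:ℝ), ε < D0 d K * δ ε) :
    ∀ u : EuclideanSpace ℝ (Fin d) → ℝ, MemLp u 2 (volume.restrict Ω) →
      ∃ uε : ℝ → EuclideanSpace ℝ (Fin d) → ℝ,
        (∀ ε > (0:ℝ), MemLp (uε ε) 2 (volume.restrict Ω)) ∧
        (∀ ε > (0:ℝ), Fphi d φ Ω K (δ ε) ε (uε ε) = 0) ∧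
        Tendsto (fun ε => ∫ x in Ω, (uε ε x - u x) ^ 2) (𝓝[>] (0:ℝ)) (𝓝 0) :=
  stmt_2_general d K hK Ω hΩb φ hsupp δ hδpos hδ0 hδlt
end
end

section
/- Assume K ⊆ B̄_L (the closed ball of radius L centered at 0). Let δ > 0 and let s ≥ 4(L+1)δ. Then for every z ∈ ℝ^d, the number of indices j ∈ ℤ^d with δ(j + K) ⊆ z + [0,s)^d is at least 2^{−d}(s/δ)^d, and consequently the Lebesgue measure of δE ∩ (z + [0,s)^d) is at least 2^{−d} |K| s^d. -/
open MeasureTheory Filter Metric Set Pointwise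
open scoped Topology ENNReal NNReal

noncomputable section

/-- The half-open cube `[0,s)^d`. -/
def cubeS (d : ℕ) (s : ℝ) : Set (EuclideanSpace ℝ (Fin d)) :=
  {x | ∀ i, 0 ≤ x i ∧ x i < s}

/-!
Since `K ⊆ B̄_L`, the cell `δ(j + K)` lies in `z + [0,s)^d` as soon as every `j i` lies in
`[z i/δ + L, (z i + s)/δ - L)`, an interval of length `s/δ - 2L ≥ s/(2δ) + 1` and hence containing
at least `s/(2δ)` integers. The cells are pairwise disjoint translates of `δK`, so the measure
bound is this count times `δ^d |K|`.
-/

open scoped Finset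

lemma sub_sub_one_le_card_Ico_ceil (a b : ℝ) : b - a - 1 ≤ #(Finset.Ico ⌈a⌉ ⌈b⌉) := by
  rw [Int.card_Ico]
  calc b - a - 1 ≤ ((⌈b⌉ - ⌈a⌉ : ℤ) : ℝ) := by
        push_cast; linarith [Int.le_ceil b, Int.ceil_lt_add_one a]
    _ ≤ ((⌈b⌉ - ⌈a⌉).toNat : ℤ) := by exact_mod_cast Int.self_le_toNat _

lemma pow_card_le_card_piFinset_Ico_ceil {ι : Type*} [Fintype ι] [DecidableEq ι] (a b : ι → ℝ)
    {c : ℝ} (hc : 0 ≤ c) (hab : ∀ i, c ≤ b i - a i - 1) :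
    c ^ Fintype.card ι ≤ #(Fintype.piFinset fun i => Finset.Ico ⌈a i⌉ ⌈b i⌉) := by
  rw [Fintype.card_piFinset, Nat.cast_prod, ← Finset.card_univ, ← Finset.prod_const]
  exact Finset.prod_le_prod (fun _ _ => hc)
    fun i _ => (hab i).trans (sub_sub_one_le_card_Ico_ceil (a i) (b i))

section Lattice

variable {d : ℕ}

lemma lat_add (j k : Fin d → ℤ) : lat d (j + k) = lat d j + lat d k := by
  ext i; simp [lat]

lemma smul_lat_vadd_apply (δ : ℝ) (j : Fin d → ℤ) (y : EuclideanSpace ℝ (Fin d)) (i : Fin d) :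
    (δ • (lat d j +ᵥ y)) i = δ * (j i + y i) := by
  simp [lat, mul_add]

lemma mem_vadd_cubeS {z x : EuclideanSpace ℝ (Fin d)} {s : ℝ} :
    x ∈ z +ᵥ cubeS d s ↔ ∀ i, z i ≤ x i ∧ x i < z i + s := by
  simp only [Set.mem_vadd_set_iff_neg_vadd_mem, cubeS, Set.mem_ofPred_eq, vadd_eq_add,
    PiLp.add_apply, PiLp.neg_apply]
  exact forall_congr' fun i => and_congr (by constructor <;> intro h <;> linarith)
    (by constructor <;> intro h <;> linarith)

lemma smul_lat_vadd_mem_vadd_cubeS_iff {δ s : ℝ} (hδ : 0 < δ) {z y : EuclideanSpace ℝ (Fin d)}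
    {j : Fin d → ℤ} :
    δ • (lat d j +ᵥ y) ∈ z +ᵥ cubeS d s ↔ ∀ i, z i / δ ≤ j i + y i ∧ j i + y i < (z i + s) / δ := by
  simp only [mem_vadd_cubeS, smul_lat_vadd_apply, div_le_iff₀' hδ, lt_div_iff₀' hδ]

lemma isBounded_vadd_cubeS (z : EuclideanSpace ℝ (Fin d)) (s : ℝ) :
    Bornology.IsBounded (z +ᵥ cubeS d s) := by
  refine (isCompact_Icc (a := z.ofLp) (b := z.ofLp + fun _ => s) |>.image
    (PiLp.continuous_toLp 2 _)).isBounded.subset fun x hx => ?_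
  have hx := mem_vadd_cubeS.1 hx
  exact ⟨x.ofLp, ⟨fun i => (hx i).1, fun i => (hx i).2.le⟩, rfl⟩

variable {K : Set (EuclideanSpace ℝ (Fin d))}

lemma smul_lat_vadd_subset_vadd_cubeS {L δ s : ℝ} (hKL : K ⊆ closedBall 0 L) (hδ : 0 < δ)
    {z : EuclideanSpace ℝ (Fin d)} {j : Fin d → ℤ}
    (hj : ∀ i, z i / δ + L ≤ j i ∧ (j i : ℝ) < (z i + s) / δ - L) :
    δ • (lat d j +ᵥ K) ⊆ z +ᵥ cubeS d s := by
  rintro _ ⟨_, ⟨y, hy, rfl⟩, rfl⟩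
  refine (smul_lat_vadd_mem_vadd_cubeS_iff hδ).2 fun i => ?_
  have hyi : |y i| ≤ L :=
    (Real.norm_eq_abs _ ▸ PiLp.norm_apply_le y i).trans (mem_closedBall_zero_iff.1 (hKL hy))
  have := abs_le.1 hyi
  constructor <;> linarith [hj i]

lemma finite_setOf_smul_lat_vadd_subset_vadd_cubeS (hK : K.Nonempty) {δ : ℝ} (hδ : 0 < δ)
    (z : EuclideanSpace ℝ (Fin d)) (s : ℝ) :
    {j : Fin d → ℤ | δ • (lat d j +ᵥ K) ⊆ z +ᵥ cubeS d s}.Finite := by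
  obtain ⟨y, hy⟩ := hK
  refine (Set.Finite.pi (t := fun i => Set.Icc ⌊z i / δ - y i⌋ ⌈(z i + s) / δ - y i⌉)
    fun i => Set.finite_Icc _ _).subset fun j hj => Set.mem_univ_pi.2 fun i => ?_
  have hji := (smul_lat_vadd_mem_vadd_cubeS_iff hδ).1
    (hj (Set.smul_mem_smul_set (Set.vadd_mem_vadd_set hy))) i
  exact ⟨Int.cast_le.1 ((Int.floor_le _).trans (by linarith [hji.1])),
    Int.cast_le.1 ((by linarith [hji.2] : (j i : ℝ) ≤ _).trans (Int.le_ceil _))⟩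

open Function in
lemma pairwise_disjoint_lat_vadd (hdisj : ∀ k : Fin d → ℤ, k ≠ 0 → Disjoint (lat d k +ᵥ K) K) :
    Pairwise (Disjoint on fun j => lat d j +ᵥ K) := by
  intro j j' hne
  have := hdisj (j - j') (sub_ne_zero.2 hne)
  rwa [← Set.disjoint_vadd_set (a := lat d j'), vadd_vadd, ← lat_add, add_sub_cancel] at this

lemma volume_biUnion_lat_vadd (hK : MeasurableSet K)
    (hdisj : ∀ k : Fin d → ℤ, k ≠ 0 → Disjoint (lat d k +ᵥ K) K) (P : Finset (Fin d → ℤ)) :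
    volume (⋃ j ∈ P, lat d j +ᵥ K) = #P * volume K := by
  rw [measure_biUnion_finset ((pairwise_disjoint_lat_vadd hdisj).set_pairwise _)
    fun j _ => hK.const_vadd _]
  simp only [measure_vadd, Finset.sum_const, nsmul_eq_mul]

lemma card_mul_volume_le_volume_smul_latSet_inter (hK : MeasurableSet K)
    (hdisj : ∀ k : Fin d → ℤ, k ≠ 0 → Disjoint (lat d k +ᵥ K) K) {δ : ℝ} (hδ : 0 ≤ δ)
    {B : Set (EuclideanSpace ℝ (Fin d))} (P : Finset (Fin d → ℤ))
    (hP : ∀ j ∈ P, δ • (lat d j +ᵥ K) ⊆ B) :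
    #P * (ENNReal.ofReal (δ ^ d) * volume K) ≤ volume (δ • latSet d K ∩ B) := by
  calc _ = volume (δ • ⋃ j ∈ P, lat d j +ᵥ K) := by
        rw [Measure.addHaar_smul_of_nonneg volume hδ, finrank_euclideanSpace_fin,
          volume_biUnion_lat_vadd hK hdisj]
        ring
    _ ≤ _ := by
      refine measure_mono (Set.subset_inter (Set.smul_set_mono ?_) ?_)
      · exact Set.iUnion₂_subset fun j _ => Set.subset_iUnion (fun k => lat d k +ᵥ K) j
      · rw [Set.smul_set_iUnion₂]
        exact Set.iUnion₂_subset hP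

end Lattice

theorem stmt_8_general (d : ℕ)
    (K : Set (EuclideanSpace ℝ (Fin d))) (hK : IsAdmissibleK d K)
    (L : ℝ) (hKL : K ⊆ Metric.closedBall 0 L)
    (δ s : ℝ) (hδ : 0 < δ) (hs : 4 * (L + 1) * δ ≤ s) :
    ∀ z : EuclideanSpace ℝ (Fin d),
      (s / δ) ^ d / 2 ^ d ≤
        (Nat.card {j : Fin d → ℤ // δ • (lat d j +ᵥ K) ⊆ z +ᵥ cubeS d s} : ℝ) ∧
      (2:ℝ) ^ (-(d:ℤ)) * (volume K).toReal * s ^ d ≤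
        (volume (δ • latSet d K ∩ (z +ᵥ cubeS d s))).toReal := by
  intro z
  obtain ⟨⟨U, -, hU, -, rfl⟩, -, hdisj⟩ := hK
  obtain ⟨y, hy⟩ : (closure U).Nonempty := hU.nonempty.closure
  have hL : 0 ≤ L := (norm_nonneg y).trans (mem_closedBall_zero_iff.1 (hKL hy))
  have hsδ : 4 * (L + 1) ≤ s / δ := (le_div_iff₀ hδ).2 hs
  set P := {j : Fin d → ℤ | δ • (lat d j +ᵥ closure U) ⊆ z +ᵥ cubeS d s}
  have hP : P.Finite := finite_setOf_smul_lat_vadd_subset_vadd_cubeS ⟨y, hy⟩ hδ z s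
  have hcount : (s / δ) ^ d / 2 ^ d ≤ (Nat.card P : ℝ) := by
    let T := Fintype.piFinset fun i => Finset.Ico ⌈z i / δ + L⌉ ⌈(z i + s) / δ - L⌉
    have hTP : (T : Set (Fin d → ℤ)) ⊆ P := fun j hj => smul_lat_vadd_subset_vadd_cubeS hKL hδ
      fun i => by simpa only [Finset.mem_Ico, Int.ceil_le, Int.lt_ceil] using
        Fintype.mem_piFinset.1 hj i
    calc (s / δ) ^ d / 2 ^ d = (s / δ / 2) ^ Fintype.card (Fin d) := by
          rw [Fintype.card_fin, div_pow (s / δ)]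
      _ ≤ #T := pow_card_le_card_piFinset_Ico_ceil _ _ (by linarith) fun i => by
          rw [add_div]; linarith
      _ ≤ Nat.card P := by
          rw [Nat.card_coe_set_eq, ← Set.ncard_coe_finset]
          exact_mod_cast Set.ncard_le_ncard hTP hP
  refine ⟨hcount, ?_⟩
  have hvol := card_mul_volume_le_volume_smul_latSet_inter isClosed_closure.measurableSet hdisj
    hδ.le hP.toFinset fun j hj => hP.mem_toFinset.1 hj
  have hfin : volume (δ • latSet d (closure U) ∩ (z +ᵥ cubeS d s)) ≠ ⊤ :=
    ((measure_mono Set.inter_subset_right).trans_lt (isBounded_vadd_cubeS z s).measure_lt_top).ne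
  calc (2:ℝ) ^ (-(d:ℤ)) * (volume (closure U)).toReal * s ^ d
      = (s / δ) ^ d / 2 ^ d * (δ ^ d * (volume (closure U)).toReal) := by
        rw [zpow_neg, zpow_natCast, div_pow]
        field_simp
    _ ≤ Nat.card P * (δ ^ d * (volume (closure U)).toReal) := by gcongr
    _ = (#hP.toFinset * (ENNReal.ofReal (δ ^ d) * volume (closure U))).toReal := by
        rw [← Set.ncard_eq_toFinset_card P hP, ← Nat.card_coe_set_eq]
        simp [ENNReal.toReal_ofReal, hδ.le]
    _ ≤ _ := ENNReal.toReal_mono hfin hvol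

/-- lower bound on the number of cells of `δE` inside a cube of side `s`,
and on the measure of `δE` in such a cube. -/
theorem stmt_8 (d : ℕ) (hd : 1 ≤ d)
    (K : Set (EuclideanSpace ℝ (Fin d))) (hK : IsAdmissibleK d K)
    (L : ℝ) (hKL : K ⊆ Metric.closedBall 0 L)
    (δ s : ℝ) (hδ : 0 < δ) (hs : 4 * (L + 1) * δ ≤ s) :
    ∀ z : EuclideanSpace ℝ (Fin d),
      (s / δ) ^ d / 2 ^ d ≤
        (Nat.card {j : Fin d → ℤ // δ • (lat d j +ᵥ K) ⊆ z +ᵥ cubeS d s} : ℝ) ∧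
      (2:ℝ) ^ (-(d:ℤ)) * (volume K).toReal * s ^ d ≤
        (volume (δ • latSet d K ∩ (z +ᵥ cubeS d s))).toReal :=
  stmt_8_general d K hK L hKL δ s hδ hs
end
end
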